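/- Suppose M is uniformly continuous and let Λ ∈ E_⊥(M). Then F(Λ)(Ω) = 1, where F(Λ) is the pushforward of Λ under the coding map F. -/

import Mathlib

open MeasureTheory Filter Topology
open scoped ENNReal NNReal Classical

noncomputable section

/-- A countable Markov system `(K_{i(e)}, w_e, p_e)_{e ∈ E}` on a metric space `K`:
a partition `(K_j)_{j ∈ N}` of `K` into nonempty Borel sets, source and target maps
`i, t : E → N` (`i` surjective), and for each `e ∈ E` Borel maps `w_e` and probability
functions `p_e` (extended by zero outside `K_{i(e)}`) with
`∑_{e, i(e)=j} p_e(y) = 1` for `y ∈ K_j`. -/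
structure MarkovSystem (K : Type*) [MetricSpace K] [MeasurableSpace K]
    (N : Type*) (E : Type*) where
  Kset : N → Set K
  Kset_nonempty : ∀ j, (Kset j).Nonempty
  Kset_measurable : ∀ j, MeasurableSet (Kset j)
  Kset_disjoint : Pairwise (Function.onFun Disjoint Kset)
  Kset_cover : (⋃ j, Kset j) = Set.univ
  i : E → N
  t : E → N
  i_surj : Function.Surjective i
  w : E → K → K
  p : E → K → ℝ
  w_measurable : ∀ e, Measurable (w e)
  p_measurable : ∀ e, Measurable (p e)
  p_nonneg : ∀ e x, 0 ≤ p e x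
  p_le_one : ∀ e x, p e x ≤ 1
  p_zero_outside : ∀ e x, x ∉ Kset (i e) → p e x = 0
  w_mapsTo : ∀ e, Set.MapsTo (w e) (Kset (i e)) (Kset (t e))
  p_pos_somewhere : ∀ e, ∃ x ∈ Kset (i e), 0 < p e x
  p_tsum_one : ∀ j, ∀ x ∈ Kset j, (∑' e : {e : E // i e = j}, p e.val x) = 1

/-- `Ē = E ∪ {∞}` (one-point compactification); with `E` countable its Borel σ-algebra
consists of all subsets. -/
instance optionMeasurableSpace (E : Type*) : MeasurableSpace (Option E) := ⊤

/-- The code space `Σ̄ = Ē^ℤ`, carrying the product σ-algebra. -/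
abbrev CodeSpace (E : Type*) : Type _ := ℤ → Option E

/-- The left shift `S` on the code space, `(Sσ)_{k-1} = σ_k`. -/
def shiftMap (E : Type*) : CodeSpace E → CodeSpace E := fun σ k => σ (k + 1)

/-- The cylinder set `_m[es₀, …, es_{n}] = {σ : σ_{m+k} = es_k}`. -/
def cylSetL {E : Type*} (m : ℤ) (es : List (Option E)) : Set (CodeSpace E) :=
  {σ | ∀ (k : ℕ) (h : k < es.length), σ (m + (k : ℤ)) = es.get ⟨k, h⟩}

/-- The σ-algebra `𝓕` generated by the cylinder sets `_m[e_m, …, e_0]`, `m ≤ 0`. -/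
def pastAlgebra (E : Type*) : MeasurableSpace (CodeSpace E) :=
  MeasurableSpace.generateFrom
    {A | ∃ es : List (Option E), es ≠ [] ∧ A = cylSetL (1 - (es.length : ℤ)) es}

/-- The conditional entropy `h_S(Λ) = H_Λ((_1[e])_{e ∈ Ē} | 𝓕)`. -/
def entropyS {E : Type*} (Λ : Measure (CodeSpace E)) : ℝ≥0∞ :=
  ∑' eo : Option E,
    ∫⁻ σ, ENNReal.ofReal
        (Real.negMulLog
          ((Λ[Set.indicator {τ : CodeSpace E | τ 1 = eo} (fun _ => (1 : ℝ)) | pastAlgebra E]) σ)) ∂Λ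

namespace MarkovSystem

variable {K : Type*} [MetricSpace K] [MeasurableSpace K] {N E : Type*}

/-- The Markov operator `Uf = ∑_e p_e · (f ∘ w_e)` acting on nonnegative Borel functions. -/
def markovOp (M : MarkovSystem K N E) (f : K → ℝ≥0∞) : K → ℝ≥0∞ :=
  fun x => ∑' e : E, ENNReal.ofReal (M.p e x) * f (M.w e x)

/-- The adjoint operator `U*` acting on measures, `(U*ν)(B) = ∫ U(1_B) dν`. -/
def adjOp (M : MarkovSystem K N E) (ν : Measure K) : Measure K :=
  Measure.sum fun e : E =>
    Measure.map (M.w e) (ν.withDensity fun x => ENNReal.ofReal (M.p e x))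

/-- `μ ∈ P(M)`: `μ` is an invariant Borel probability measure, `U*μ = μ`. -/
def IsInvariantMeasure (M : MarkovSystem K N E) (μ : Measure K) : Prop :=
  IsProbabilityMeasure μ ∧ M.adjOp μ = μ

/-- The path space `Σ_G`: all coordinates lie in `E` and `i(σ_{n+1}) = t(σ_n)`. -/
def pathSpace (M : MarkovSystem K N E) : Set (CodeSpace E) :=
  {σ | ∀ n : ℤ, ∃ e e' : E, σ n = some e ∧ σ (n + 1) = some e' ∧ M.i e' = M.t e}

/-- `T_j = {σ ∈ Σ_G : t(σ_0) = j}`. -/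
def Tset (M : MarkovSystem K N E) (j : N) : Set (CodeSpace E) :=
  {σ | σ ∈ M.pathSpace ∧ ∃ e : E, σ 0 = some e ∧ M.t e = j}

/-- `w` extended to `Ē`, with `w_∞ = id`. -/
def wext (M : MarkovSystem K N E) : Option E → K → K := fun o => o.elim id M.w

/-- `p` extended to `Ē`, with `p_∞ = 0`. -/
def pext (M : MarkovSystem K N E) : Option E → K → ℝ := fun o => o.elim (fun _ => 0) M.p

/-- `i` extended to `Ē`, with `i(∞) = j₀`. -/
def iext (M : MarkovSystem K N E) (j0 : N) : Option E → N := fun o => o.elim j0 M.i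

/-- `t` extended to `Ē`, with `t(∞) = j₀`. -/
def text (M : MarkovSystem K N E) (j0 : N) : Option E → N := fun o => o.elim j0 M.t

/-- `iterW M σ n y = w_{σ_0} ∘ w_{σ_{-1}} ∘ ⋯ ∘ w_{σ_{-n}} (y)`. -/
def iterW (M : MarkovSystem K N E) (σ : CodeSpace E) : ℕ → K → K
  | 0, y => M.wext (σ 0) y
  | n + 1, y => M.iterW σ n (M.wext (σ (-(n + 1 : ℤ))) y)

/-- `orbit M j0 xp σ n = w_{σ_0} ∘ ⋯ ∘ w_{σ_{-n}} (x_{i(σ_{-n})})`. -/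
def orbit (M : MarkovSystem K N E) (j0 : N) (xp : N → K) (σ : CodeSpace E) (n : ℕ) : K :=
  M.iterW σ n (xp (M.iext j0 (σ (-(n : ℤ)))))

/-- `D`: the set of `σ ∈ Σ_G` for which `lim_{m → -∞} w_{σ_0} ∘ ⋯ ∘ w_{σ_m}(x_{i(σ_m)})` exists. -/
def codeDomain (M : MarkovSystem K N E) (j0 : N) (xp : N → K) : Set (CodeSpace E) :=
  {σ | σ ∈ M.pathSpace ∧ ∃ l : K, Tendsto (fun n : ℕ => M.orbit j0 xp σ n) atTop (𝓝 l)}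

/-- The coding map `F`: the above limit on `D`, and `x_{t(σ_0)}` elsewhere. -/
def code (M : MarkovSystem K N E) (j0 : N) (xp : N → K) (σ : CodeSpace E) : K :=
  if h : σ ∈ M.codeDomain j0 xp then h.2.choose else xp (M.text j0 (σ 0))

/-- `Λ ∈ E(M)`: `Λ` is a shift-invariant Borel probability measure with `Λ(D) = 1` and
`E_Λ(1_{_1[e]} | 𝓕) = p_e ∘ F` `Λ`-a.e. for every `e ∈ E` (an equilibrium state). -/
def IsEquilibrium (M : MarkovSystem K N E) (j0 : N) (xp : N → K)
    (Λ : Measure (CodeSpace E)) : Prop :=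
  IsProbabilityMeasure Λ ∧ Measure.map (shiftMap E) Λ = Λ ∧
    Λ (M.codeDomain j0 xp) = 1 ∧
    ∀ e : E,
      (Λ[Set.indicator {σ : CodeSpace E | σ 1 = some e} (fun _ => (1 : ℝ)) | pastAlgebra E])
        =ᵐ[Λ] fun σ => M.p e (M.code j0 xp σ)

/-- `pbar` is the family of continuous extensions `p̄_e` of `p_e|_{K_{i(e)}}` to the closure
of `K_{i(e)}`, extended further by zero on `K`. -/
def IsUCExtensionP (M : MarkovSystem K N E) (pbar : E → K → ℝ) : Prop :=
  ∀ e : E, ContinuousOn (pbar e) (closure (M.Kset (M.i e))) ∧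
    (∀ x ∈ M.Kset (M.i e), pbar e x = M.p e x) ∧
    (∀ x, x ∉ closure (M.Kset (M.i e)) → pbar e x = 0)

/-- `wb` is a family of continuous extensions `w̄_e` of `w_e|_{K_{i(e)}}` to the closure
of `K_{i(e)}`. -/
def IsUCExtensionW (M : MarkovSystem K N E) (wb : E → K → K) : Prop :=
  ∀ e : E, ContinuousOn (wb e) (closure (M.Kset (M.i e))) ∧
    (∀ x ∈ M.Kset (M.i e), wb e x = M.w e x)

/-- The Markov system is uniformly continuous: each `w_e|_{K_{i(e)}}` and `p_e|_{K_{i(e)}}`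
is uniformly continuous. -/
def IsUniformlyContinuous (M : MarkovSystem K N E) : Prop :=
  ∀ e : E, UniformContinuousOn (M.w e) (M.Kset (M.i e)) ∧
    UniformContinuousOn (M.p e) (M.Kset (M.i e))

/-- `∂p_e = p̄_e · 1_{cl(K_{i(e)}) \ K_{i(e)}}`. -/
def dp (M : MarkovSystem K N E) (pbar : E → K → ℝ) (e : E) : K → ℝ :=
  Set.indicator (closure (M.Kset (M.i e)) \ M.Kset (M.i e)) (pbar e)

/-- `Λ ∈ Ẽ(M)` (asymptotic state): shift-invariant probability with `Λ(D) = 1` and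
`E_Λ(1_{_1[e]} | 𝓕) = (p̄_e ∘ F)·1_{T_{i(e)}}` `Λ`-a.e. for every `e`. -/
def IsAsymptotic (M : MarkovSystem K N E) (j0 : N) (xp : N → K) (pbar : E → K → ℝ)
    (Λ : Measure (CodeSpace E)) : Prop :=
  IsProbabilityMeasure Λ ∧ Measure.map (shiftMap E) Λ = Λ ∧
    Λ (M.codeDomain j0 xp) = 1 ∧
    ∀ e : E,
      (Λ[Set.indicator {σ : CodeSpace E | σ 1 = some e} (fun _ => (1 : ℝ)) | pastAlgebra E])
        =ᵐ[Λ] Set.indicator (M.Tset (M.i e)) (fun σ => pbar e (M.code j0 xp σ))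

/-- `Λ ∈ E_⊥(M)`: shift-invariant probability with `Λ(D) = 1` and
`E_Λ(1_{_1[e]} | 𝓕) = (∂p_e ∘ F)·1_{T_{i(e)}}` `Λ`-a.e. for every `e`. -/
def IsPerp (M : MarkovSystem K N E) (j0 : N) (xp : N → K) (pbar : E → K → ℝ)
    (Λ : Measure (CodeSpace E)) : Prop :=
  IsProbabilityMeasure Λ ∧ Measure.map (shiftMap E) Λ = Λ ∧
    Λ (M.codeDomain j0 xp) = 1 ∧
    ∀ e : E,
      (Λ[Set.indicator {σ : CodeSpace E | σ 1 = some e} (fun _ => (1 : ℝ)) | pastAlgebra E])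
        =ᵐ[Λ] Set.indicator (M.Tset (M.i e)) (fun σ => M.dp pbar e (M.code j0 xp σ))

/-- `G = ⋃_{k ≥ 0} ⋃_{j ∈ N} S^{-k}(F^{-1}(K_j) ∩ T_j)`. -/
def Gset (M : MarkovSystem K N E) (j0 : N) (xp : N → K) : Set (CodeSpace E) :=
  ⋃ (k : ℕ) (j : N), (shiftMap E)^[k] ⁻¹' ((M.code j0 xp) ⁻¹' (M.Kset j) ∩ M.Tset j)

/-- `M` is non-degenerate: for every asymptotic state `Λ` there is `i ∈ N` with
`Λ(T_i ∩ F^{-1}(K_i)) > 0`. -/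
def IsNonDegenerate (M : MarkovSystem K N E) (j0 : N) (xp : N → K) (pbar : E → K → ℝ) : Prop :=
  ∀ Λ : Measure (CodeSpace E), M.IsAsymptotic j0 xp pbar Λ →
    ∃ i : N, 0 < Λ (M.Tset i ∩ (M.code j0 xp) ⁻¹' (M.Kset i))

/-- `M` is consistent: `F(Λ) ∈ P(M)` for every asymptotic state `Λ`. -/
def IsConsistent (M : MarkovSystem K N E) (j0 : N) (xp : N → K) (pbar : E → K → ℝ) : Prop :=
  ∀ Λ : Measure (CodeSpace E), M.IsAsymptotic j0 xp pbar Λ →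
    M.IsInvariantMeasure (Measure.map (M.code j0 xp) Λ)

/-- `Rf = ∑_e ∂p_e · (f ∘ w̄_e)`. -/
def Rop (M : MarkovSystem K N E) (pbar : E → K → ℝ) (wb : E → K → K)
    (f : K → ℝ≥0∞) : K → ℝ≥0∞ :=
  fun x => ∑' e : E, ENNReal.ofReal (M.dp pbar e x) * f (wb e x)

/-- `Ω = ⋂_{n ≥ 1} {R^n 1 ≥ 1}`. -/
def OmegaSet (M : MarkovSystem K N E) (pbar : E → K → ℝ) (wb : E → K → K) : Set K :=
  ⋂ n : ℕ, {x : K | 1 ≤ (M.Rop pbar wb)^[n + 1] (fun _ => 1) x}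

/-- `ξ_j = ∑_{e, i(e) = j} sup_{x ∈ K_j} p_e(x)`. -/
def xi (M : MarkovSystem K N E) (j : N) : ℝ≥0∞ :=
  ∑' e : {e : E // M.i e = j}, ⨆ x ∈ M.Kset j, ENNReal.ofReal (M.p e.val x)

/-- `M` has a dominating Markov chain: `ξ_j < ∞` for all `j ∈ N`. -/
def HasDominatingChain (M : MarkovSystem K N E) : Prop := ∀ j : N, M.xi j ≠ ⊤

/-- `ξ_j · q_{j j'} = ∑_{e, i(e) = j, t(e) = j'} sup_{x ∈ K_j} p_e(x)`. -/
def xiq (M : MarkovSystem K N E) (j j' : N) : ℝ≥0∞ :=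
  ∑' e : {e : E // M.i e = j ∧ M.t e = j'}, ⨆ x ∈ M.Kset j, ENNReal.ofReal (M.p e.val x)

/-- `c = ∑_{j'} sup_j ξ_j q_{j j'}`. -/
def cConst (M : MarkovSystem K N E) : ℝ≥0∞ := ∑' j' : N, ⨆ j : N, M.xiq j j'

/-- `α^{x_0}_n({j}) = (1/n) ∑_{k=1}^n ((U*)^k δ_{x_0})(K_j)`. -/
def alphaMeas (M : MarkovSystem K N E) (x0 : K) (n : ℕ) (j : N) : ℝ≥0∞ :=
  (n : ℝ≥0∞)⁻¹ * ∑ k ∈ Finset.range n, (M.adjOp^[k + 1] (Measure.dirac x0)) (M.Kset j)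

/-- Condition (T) at `x_0`: the sequence `(α^{x_0}_n)_n` is uniformly tight. -/
def ConditionT (M : MarkovSystem K N E) (x0 : K) : Prop :=
  ∀ ε : ℝ, 0 < ε → ∃ V : Finset N,
    ∀ n : ℕ, (∑' j : {j : N // j ∉ V}, M.alphaMeas x0 (n + 1) j.val) < ENNReal.ofReal ε

/-- `M` is contractive with contraction rate `a`:
`∑_{e, i(e) = j} p_e(x) d(w_e x, w_e y) ≤ a·d(x, y)` on each `K_j`. -/
def IsContractive (M : MarkovSystem K N E) (a : ℝ) : Prop :=
  ∀ j : N, ∀ x ∈ M.Kset j, ∀ y ∈ M.Kset j,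
    (∑' e : {e : E // M.i e = j},
        ENNReal.ofReal (M.p e.val x * dist (M.w e.val x) (M.w e.val y)))
      ≤ ENNReal.ofReal (a * dist x y)

/-- `L(x) = ∑_j d(x, x_j)·1_{K_j}(x)`. -/
def Lfun (M : MarkovSystem K N E) (xp : N → K) : K → ℝ≥0∞ :=
  fun x => ∑' j : N, Set.indicator (M.Kset j) (fun y => ENNReal.ofReal (dist y (xp j))) x

/-- `b = sup_j sup_{x ∈ K_j} ∑_{e, i(e) = j} p_e(x)·d(w_e(x_{i(e)}), x_{t(e)})`. -/
def bConst (M : MarkovSystem K N E) (xp : N → K) : ℝ≥0∞ :=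
  ⨆ j : N, ⨆ x ∈ M.Kset j,
    ∑' e : {e : E // M.i e = j},
      ENNReal.ofReal (M.p e.val x * dist (M.w e.val (xp (M.i e.val))) (xp (M.t e.val)))

/-- `P^m_x` evaluated on a word: `p_{e_0}(x)·p_{e_1}(w_{e_0}x)·⋯`. -/
def wordProb (M : MarkovSystem K N E) : List (Option E) → K → ℝ
  | [], _ => 1
  | o :: rest, x => M.pext o x * M.wordProb rest (M.wext o x)

/-- `Λ = Φ(μ)`: `Λ` is a shift-invariant Borel probability measure with
`Λ(_m[e_m, …, e_n]) = ∫ P^m_x(_m[e_m, …, e_n]) dμ(x)` for all cylinders with `m ≤ 0`. -/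
def IsPhiOf (M : MarkovSystem K N E) (μ : Measure K) (Λ : Measure (CodeSpace E)) : Prop :=
  IsProbabilityMeasure Λ ∧ Measure.map (shiftMap E) Λ = Λ ∧
    ∀ m : ℤ, m ≤ 0 → ∀ es : List (Option E),
      Λ (cylSetL m es) = ∫⁻ x, ENNReal.ofReal (M.wordProb es x) ∂μ

/-- The (negative of the) energy function: `-u(σ) = -log p_{σ_1}(F(σ))` on `D`
(`+∞` if `p_{σ_1}(F(σ)) = 0`) and `+∞` off `D`, valued in `[0, ∞]`. -/
def negEnergy (M : MarkovSystem K N E) (j0 : N) (xp : N → K) (σ : CodeSpace E) : ℝ≥0∞ :=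
  if σ ∈ M.codeDomain j0 xp then
    (σ 1).elim ⊤ fun e =>
      if M.p e (M.code j0 xp σ) = 0 then ⊤
      else ENNReal.ofReal (-Real.log (M.p e (M.code j0 xp σ)))
  else ⊤

/-- The free energy `h_S(Λ) + ∫ u dΛ`, as an extended real number. -/
def freeEnergy (M : MarkovSystem K N E) (j0 : N) (xp : N → K)
    (Λ : Measure (CodeSpace E)) : EReal :=
  (entropyS Λ : EReal) - ((∫⁻ σ, M.negEnergy j0 xp σ ∂Λ : ℝ≥0∞) : EReal)

/-- `Λ₀ ∈ E(u)`: `Λ₀` is a thermodynamic equilibrium state for the energy function `u`. -/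
def IsEquilibriumForU (M : MarkovSystem K N E) (j0 : N) (xp : N → K)
    (Λ0 : Measure (CodeSpace E)) : Prop :=
  IsProbabilityMeasure Λ0 ∧ Measure.map (shiftMap E) Λ0 = Λ0 ∧ entropyS Λ0 ≠ ⊤ ∧
    M.freeEnergy j0 xp Λ0 =
      sSup {r : EReal | ∃ Λ : Measure (CodeSpace E),
        IsProbabilityMeasure Λ ∧ Measure.map (shiftMap E) Λ = Λ ∧ entropyS Λ ≠ ⊤ ∧
          r = M.freeEnergy j0 xp Λ}

end MarkovSystem

end

/-!
Write `φ_e = E_Λ(1_{_1[e]} | 𝓕)`. On `cl(K_j)` the `p̄_e` with `i(e) = j` sum to at most `1`, so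
`Λ ∈ E_⊥(M)` gives `∑_e φ_e ≤ 1`; since `∫ ∑_e φ_e dΛ = Λ(σ_1 ∈ E) = 1`, in fact `∑_e φ_e = 1`
a.e. Now show `R^n 1 ∘ F ≥ 1` a.e. by induction. By shift invariance `R^n 1 (F(Sσ)) ≥ 1` a.e.,
and `F(Sσ) = w̄_e(F σ)` on `_1[e]`; so the `𝓕`-measurable event `{R^n 1 (w̄_e ∘ F) < 1}` meets
`_1[e]` in a null set, and `φ_e` vanishes on it. Hence a.e.
`R^{n+1} 1 (F σ) = ∑_e ∂p_e(F σ) R^n 1 (w̄_e(F σ)) ≥ ∑_e φ_e(σ) = 1`.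
-/

section CondExp

variable {α : Type*} {m m0 : MeasurableSpace α} {μ : Measure α} [IsFiniteMeasure μ] {A : Set α}

theorem lintegral_ofReal_condExp_indicator (hm : m ≤ m0) (hA : MeasurableSet A) :
    ∫⁻ x, ENNReal.ofReal ((μ[A.indicator fun _ => (1 : ℝ) | m]) x) ∂μ = μ A := by
  have hnonneg : 0 ≤ᵐ[μ] μ[A.indicator fun _ => (1 : ℝ) | m] :=
    condExp_nonneg (.of_forall (Set.indicator_nonneg fun _ _ => zero_le_one))
  rw [← ofReal_integral_eq_lintegral_ofReal integrable_condExp hnonneg, integral_condExp hm,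
    integral_indicator_const _ hA, smul_eq_mul, mul_one, measureReal_def,
    ENNReal.ofReal_toReal (measure_ne_top μ A)]

theorem ae_condExp_indicator_eq_zero_of_measure_inter_eq_zero (hm : m ≤ m0)
    (hA : MeasurableSet A) {C : Set α} (hC : MeasurableSet[m] C) (hAC : μ (A ∩ C) = 0) :
    ∀ᵐ x ∂μ, x ∈ C → (μ[A.indicator fun _ => (1 : ℝ) | m]) x = 0 := by
  have hnonneg : 0 ≤ᵐ[μ.restrict C] μ[A.indicator fun _ => (1 : ℝ) | m] :=
    ae_restrict_of_ae (condExp_nonneg (.of_forall (Set.indicator_nonneg fun _ _ => zero_le_one)))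
  have hint : ∫ x in C, (μ[A.indicator fun _ => (1 : ℝ) | m]) x ∂μ = 0 := by
    rw [setIntegral_condExp hm ((integrable_const 1).indicator hA) hC,
      integral_indicator_const _ hA, measureReal_def, Measure.restrict_apply hA, hAC]
    simp
  exact (ae_restrict_iff' (hm C hC)).1
    ((setIntegral_eq_zero_iff_of_nonneg_ae hnonneg integrable_condExp.integrableOn).1 hint)

end CondExp

section CodeSpace

variable {E : Type*}

theorem measurable_shiftMap : Measurable (shiftMap E) :=
  measurable_pi_lambda _ fun k => measurable_pi_apply (k + 1)

theorem measurableSet_coord_eq (n : ℤ) (o : Option E) :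
    MeasurableSet {σ : CodeSpace E | σ n = o} :=
  (measurableSet_singleton o).preimage (measurable_pi_apply n)

theorem pastAlgebra_le : pastAlgebra E ≤ MeasurableSpace.pi := by
  refine MeasurableSpace.generateFrom_le ?_
  rintro _ ⟨es, -, rfl⟩
  simp only [cylSetL, Set.ofPred_forall]
  exact .iInter fun k => .iInter fun _ => measurableSet_coord_eq _ _

variable [Countable E]

theorem measurableSet_pastAlgebra_coord_eq {k : ℤ} (hk : k ≤ 0) (o : Option E) :
    MeasurableSet[pastAlgebra E] {σ : CodeSpace E | σ k = o} := by
  obtain ⟨r, rfl⟩ : ∃ r : ℕ, k = -r := ⟨(-k).toNat, by omega⟩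
  have hcyl : {σ : CodeSpace E | σ (-r) = o} =
      ⋃ v : Fin r → Option E, cylSetL (-r) (o :: List.ofFn v) := by
    ext σ
    simp only [Set.mem_ofPred_eq, Set.mem_iUnion, cylSetL]
    refine ⟨fun h => ⟨fun i => σ (-r + (i + 1 : ℕ)), fun k hk => ?_⟩,
      fun ⟨v, hv⟩ => by simpa using hv 0 (by simp)⟩
    cases k with
    | zero => simpa using h
    | succ j => simp
  rw [hcyl]
  refine .iUnion fun v =>
    MeasurableSpace.measurableSet_generateFrom ⟨o :: List.ofFn v, List.cons_ne_nil _ _, ?_⟩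
  simp only [List.length_cons, List.length_ofFn]
  congr 1
  omega

theorem measurable_pastAlgebra_coord {k : ℤ} (hk : k ≤ 0) :
    Measurable[pastAlgebra E] fun σ : CodeSpace E => σ k :=
  @measurable_to_countable' _ _ _ _ (pastAlgebra E) _ (measurableSet_pastAlgebra_coord_eq hk)

def pastWindow (n : ℕ) (σ : CodeSpace E) : Fin (n + 1) → Option E := fun k => σ (-(k : ℕ))

theorem measurable_pastWindow (n : ℕ) : Measurable[pastAlgebra E] (pastWindow n) :=
  @measurable_pi_lambda _ _ _ (pastAlgebra E) _ _ fun k => measurable_pastAlgebra_coord (by omega)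

theorem stronglyMeasurable_pastAlgebra_of_factorsThrough {β : Type*} [TopologicalSpace β]
    {n : ℕ} {f : CodeSpace E → β} (hfactor : f.FactorsThrough (pastWindow n)) :
    StronglyMeasurable[pastAlgebra E] f := by
  have hf_eq : f = Function.extend (pastWindow n) f (fun _ => f fun _ => none) ∘ pastWindow n :=
    funext fun σ => (hfactor.extend_apply _ σ).symm
  rw [hf_eq]
  exact StronglyMeasurable.of_discrete.comp_measurable (measurable_pastWindow n)

theorem tsum_measure_coord_eq_some {Λ : Measure (CodeSpace E)} [IsProbabilityMeasure Λ] {n : ℤ}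
    (h : ∀ᵐ σ ∂Λ, σ n ≠ none) : ∑' e : E, Λ {σ | σ n = some e} = 1 := by
  have hdisj : Pairwise (Function.onFun Disjoint fun e : E => {σ : CodeSpace E | σ n = some e}) :=
    (pairwise_disjoint_fiber fun σ : CodeSpace E => σ n).comp_of_injective
      (Option.some_injective E)
  rw [← measure_iUnion hdisj fun e => measurableSet_coord_eq n (some e),
    ← measure_univ (μ := Λ)]
  refine (ae_iff_measure_eq ?_).1 ?_
  · exact .iUnion fun e => (measurableSet_coord_eq n (some e)).nullMeasurableSet
  · filter_upwards [h] with σ hσ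
    obtain ⟨e, he⟩ := Option.ne_none_iff_exists'.1 hσ
    exact Set.mem_iUnion.2 ⟨e, he⟩

end CodeSpace

noncomputable def nextCondProb {E : Type*} (Λ : Measure (CodeSpace E)) (e : E) :
    CodeSpace E → ℝ :=
  Λ[{σ : CodeSpace E | σ 1 = some e}.indicator fun _ => (1 : ℝ) | pastAlgebra E]

namespace MarkovSystem

section Orbit

variable {K : Type*} [MetricSpace K] [MeasurableSpace K] {N E : Type*} (M : MarkovSystem K N E)
  (j0 : N) (xp : N → K)

theorem iterW_congr {σ τ : CodeSpace E} {n : ℕ} (h : ∀ k ≤ n, σ (-k) = τ (-k)) (y : K) :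
    M.iterW σ n y = M.iterW τ n y := by
  induction n generalizing y with
  | zero => simpa [iterW] using congrArg (M.wext · y) (h 0 le_rfl)
  | succ n ih =>
    have hn : σ (-(n + 1 : ℤ)) = τ (-(n + 1 : ℤ)) := by exact_mod_cast h (n + 1) le_rfl
    rw [iterW, iterW, hn]
    exact ih (fun k hk => h k (by omega)) _

theorem orbit_congr {σ τ : CodeSpace E} {n : ℕ} (h : ∀ k ≤ n, σ (-k) = τ (-k)) :
    M.orbit j0 xp σ n = M.orbit j0 xp τ n := by
  rw [orbit, orbit, h n le_rfl, M.iterW_congr h]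

theorem stronglyMeasurable_pastAlgebra_orbit [Countable E] (n : ℕ) :
    StronglyMeasurable[pastAlgebra E] fun σ => M.orbit j0 xp σ n :=
  stronglyMeasurable_pastAlgebra_of_factorsThrough fun _ _ h =>
    M.orbit_congr j0 xp fun k hk => congr_fun h ⟨k, Nat.lt_succ_of_le hk⟩

/-- `F` itself is not `𝓕`-measurable, since `D` constrains the future coordinates too; this
limit agrees with `F` on `D` and only sees the past. -/
noncomputable def pastCode (σ : CodeSpace E) : K :=
  haveI : Nonempty K := ⟨xp j0⟩
  limUnder atTop (M.orbit j0 xp σ ·)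

theorem stronglyMeasurable_pastCode [CompleteSpace K] [Countable E] :
    StronglyMeasurable[pastAlgebra E] (M.pastCode j0 xp) :=
  haveI : Nonempty K := ⟨xp j0⟩
  @StronglyMeasurable.limUnder _ _ _ (pastAlgebra E) _ _ _ _ _ _ _
    (M.stronglyMeasurable_pastAlgebra_orbit j0 xp)

variable {M j0 xp} {σ : CodeSpace E}

theorem tendsto_orbit_code (hσ : σ ∈ M.codeDomain j0 xp) :
    Tendsto (M.orbit j0 xp σ ·) atTop (𝓝 (M.code j0 xp σ)) := by
  rw [code, dif_pos hσ]
  exact hσ.2.choose_spec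

theorem pastCode_eq_code (hσ : σ ∈ M.codeDomain j0 xp) :
    M.pastCode j0 xp σ = M.code j0 xp σ :=
  (tendsto_orbit_code hσ).limUnder_eq

variable (M j0 xp)

theorem measurableSet_pathSpace [Countable E] : MeasurableSet M.pathSpace := by
  simp only [pathSpace, Set.ofPred_forall, Set.ofPred_exists, Set.ofPred_and]
  exact .iInter fun n => .iUnion fun e => .iUnion fun e' =>
    (measurableSet_coord_eq _ _).inter ((measurableSet_coord_eq _ _).inter (.const _))

theorem measurableSet_codeDomain [CompleteSpace K] [Countable E] :
    MeasurableSet (M.codeDomain j0 xp) :=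
  M.measurableSet_pathSpace.inter <| pastAlgebra_le _ <|
    @StronglyMeasurable.measurableSet_exists_tendsto _ _ _ (pastAlgebra E) _ _ _ _ _ _
      (M.stronglyMeasurable_pastAlgebra_orbit j0 xp)

variable {M j0 xp}

theorem iterW_mem (hσ : σ ∈ M.pathSpace) {e0 : E} (h0 : σ 0 = some e0) :
    ∀ {n : ℕ} {e : E}, σ (-n) = some e → ∀ {y}, y ∈ M.Kset (M.i e) →
      M.iterW σ n y ∈ M.Kset (M.t e0)
  | 0, e, he, y, hy => by
    rw [Nat.cast_zero, neg_zero, h0, Option.some_inj] at he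
    subst he
    rw [iterW, h0]
    exact M.w_mapsTo _ hy
  | n + 1, e, he, y, hy => by
    obtain ⟨e', e'', h1, h2, h3⟩ := hσ (-(n + 1 : ℤ))
    push_cast at he
    rw [he, Option.some_inj] at h1
    subst h1
    rw [iterW, he]
    exact iterW_mem hσ h0 (by simpa using h2) (h3 ▸ M.w_mapsTo _ hy)

theorem orbit_mem_Kset (hxp : ∀ j, xp j ∈ M.Kset j) (hσ : σ ∈ M.pathSpace) {e : E}
    (he : σ 1 = some e) (n : ℕ) : M.orbit j0 xp σ n ∈ M.Kset (M.i e) := by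
  obtain ⟨e0, e1, h0, h1, h01⟩ := hσ 0
  rw [zero_add, he, Option.some_inj] at h1
  subst h1
  obtain ⟨e', -, he', -⟩ := hσ (-n)
  rw [h01, orbit, he']
  exact iterW_mem hσ h0 he' (hxp _)

theorem code_mem_closure (hxp : ∀ j, xp j ∈ M.Kset j) (hσ : σ ∈ M.codeDomain j0 xp) {e : E}
    (he : σ 1 = some e) : M.code j0 xp σ ∈ closure (M.Kset (M.i e)) :=
  mem_closure_of_tendsto (tendsto_orbit_code hσ) (.of_forall (orbit_mem_Kset hxp hσ.1 he))

theorem shiftMap_mem_pathSpace (hσ : σ ∈ M.pathSpace) : shiftMap E σ ∈ M.pathSpace :=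
  fun n => hσ (n + 1)

theorem iterW_shiftMap (m : ℕ) (y : K) :
    M.iterW (shiftMap E σ) (m + 1) y = M.wext (σ 1) (M.iterW σ m y) := by
  induction m generalizing y with
  | zero => simp [iterW, shiftMap]
  | succ m ih =>
    rw [iterW, ih, iterW]
    congr 3

theorem orbit_shiftMap (m : ℕ) :
    M.orbit j0 xp (shiftMap E σ) (m + 1) = M.wext (σ 1) (M.orbit j0 xp σ m) := by
  rw [orbit, orbit, iterW_shiftMap]
  congr 4
  simp only [shiftMap]
  congr 1
  omega

theorem code_shiftMap (hxp : ∀ j, xp j ∈ M.Kset j) {wb : E → K → K}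
    (hwb : M.IsUCExtensionW wb) (hσ : σ ∈ M.codeDomain j0 xp) {e : E} (he : σ 1 = some e) :
    shiftMap E σ ∈ M.codeDomain j0 xp ∧
      M.code j0 xp (shiftMap E σ) = wb e (M.code j0 xp σ) := by
  have hmem := orbit_mem_Kset (j0 := j0) hxp hσ.1 he
  have hlim : Tendsto (M.orbit j0 xp (shiftMap E σ) ·) atTop (𝓝 (wb e (M.code j0 xp σ))) := by
    rw [← tendsto_add_atTop_iff_nat 1]
    have hw (n : ℕ) : M.orbit j0 xp (shiftMap E σ) (n + 1) = wb e (M.orbit j0 xp σ n) := by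
      rw [orbit_shiftMap, he, (hwb e).2 _ (hmem n)]
      rfl
    simp only [hw]
    exact ((hwb e).1 _ (code_mem_closure hxp hσ he)).tendsto.comp
      (tendsto_nhdsWithin_iff.2 ⟨tendsto_orbit_code hσ,
        .of_forall fun n => subset_closure (hmem n)⟩)
  have hSσ : shiftMap E σ ∈ M.codeDomain j0 xp := ⟨shiftMap_mem_pathSpace hσ.1, _, hlim⟩
  exact ⟨hSσ, tendsto_nhds_unique (tendsto_orbit_code hSσ) hlim⟩

end Orbit

section MarkovOperator

variable {K : Type*} [MetricSpace K] [MeasurableSpace K] {N E : Type*} {M : MarkovSystem K N E}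
  {pbar : E → K → ℝ}

theorem tsum_ofReal_p_eq_one {j : N} {x : K} (hx : x ∈ M.Kset j) :
    ∑' e : {e : E // M.i e = j}, ENNReal.ofReal (M.p e x) = 1 := by
  have hsum : Summable fun e : {e : E // M.i e = j} => M.p e x := by
    by_contra h
    simpa [tsum_eq_zero_of_not_summable h] using M.p_tsum_one j x hx
  rw [← ENNReal.ofReal_tsum_of_nonneg (fun e : {e : E // M.i e = j} => M.p_nonneg e x) hsum,
    M.p_tsum_one j x hx, ENNReal.ofReal_one]

theorem pbar_nonneg (hpbar : M.IsUCExtensionP pbar) (e : E) {x : K}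
    (hx : x ∈ closure (M.Kset (M.i e))) : 0 ≤ pbar e x :=
  le_on_closure (fun y hy => (hpbar e).2.1 y hy ▸ M.p_nonneg e y) continuousOn_const
    (hpbar e).1 hx

theorem tsum_ofReal_pbar_le_one (hpbar : M.IsUCExtensionP pbar) {j : N} {x : K}
    (hx : x ∈ closure (M.Kset j)) :
    ∑' e : {e : E // M.i e = j}, ENNReal.ofReal (pbar e x) ≤ 1 := by
  refine ENNReal.summable.tsum_le_of_sum_le fun s => ?_
  refine le_on_closure (f := fun y => ∑ e ∈ s, ENNReal.ofReal (pbar e y)) (g := fun _ => 1)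
    (fun y hy => ?_)
    (continuousOn_finsetSum s fun e _ => ?_) continuousOn_const hx
  · calc ∑ e ∈ s, ENNReal.ofReal (pbar e y)
        = ∑ e ∈ s, ENNReal.ofReal (M.p e y) :=
          Finset.sum_congr rfl fun e _ => by rw [(hpbar e).2.1 y (by rw [e.2]; exact hy)]
      _ ≤ 1 := (ENNReal.sum_le_tsum s).trans (tsum_ofReal_p_eq_one hy).le
  · obtain ⟨e, rfl⟩ := e
    exact ENNReal.continuous_ofReal.comp_continuousOn (hpbar e).1

theorem dp_nonneg (hpbar : M.IsUCExtensionP pbar) (e : E) (x : K) : 0 ≤ M.dp pbar e x :=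
  Set.indicator_nonneg (fun _ hx => pbar_nonneg hpbar e hx.1) x

theorem dp_le_pbar (hpbar : M.IsUCExtensionP pbar) (e : E) {x : K}
    (hx : x ∈ closure (M.Kset (M.i e))) : M.dp pbar e x ≤ pbar e x :=
  Set.indicator_le_self' (fun _ _ => pbar_nonneg hpbar e hx) x

theorem measurable_dp [BorelSpace K] (hpbar : M.IsUCExtensionP pbar) (e : E) :
    Measurable (M.dp pbar e) := by
  rw [dp, ← Set.piecewise_eq_indicator]
  exact ((hpbar e).1.mono Set.sdiff_subset).measurable_piecewise continuousOn_const
    (isClosed_closure.measurableSet.diff (M.Kset_measurable _))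

variable (M) in
/-- `w̄_e` matters only on `cl(K_{i(e)})`, where `∂p_e` lives; off it `wb e` is arbitrary, so it
is replaced by `id` to obtain a Borel map. -/
noncomputable def wbPiecewise (wb : E → K → K) (e : E) : K → K :=
  (closure (M.Kset (M.i e))).piecewise (wb e) id

variable {wb : E → K → K}

theorem wbPiecewise_of_mem (e : E) {x : K} (hx : x ∈ closure (M.Kset (M.i e))) :
    M.wbPiecewise wb e x = wb e x :=
  Set.piecewise_eq_of_mem _ _ _ hx

theorem measurable_wbPiecewise [BorelSpace K] (hwb : M.IsUCExtensionW wb) (e : E) :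
    Measurable (M.wbPiecewise wb e) :=
  (hwb e).1.measurable_piecewise continuousOn_id isClosed_closure.measurableSet

theorem Rop_eq_tsum_wbPiecewise (f : K → ℝ≥0∞) (x : K) :
    M.Rop pbar wb f x = ∑' e : E, ENNReal.ofReal (M.dp pbar e x) * f (M.wbPiecewise wb e x) := by
  refine tsum_congr fun e => ?_
  by_cases hx : x ∈ closure (M.Kset (M.i e))
  · rw [wbPiecewise_of_mem e hx]
  · have hx' : x ∉ closure (M.Kset (M.i e)) \ M.Kset (M.i e) := fun h => hx h.1
    simp [dp, Set.indicator_of_notMem hx']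

theorem measurable_iterate_Rop_one [BorelSpace K] [Countable E] (hpbar : M.IsUCExtensionP pbar)
    (hwb : M.IsUCExtensionW wb) (n : ℕ) : Measurable ((M.Rop pbar wb)^[n] 1) := by
  induction n with
  | zero => exact measurable_const
  | succ n ih =>
    rw [Function.iterate_succ_apply']
    have : M.Rop pbar wb ((M.Rop pbar wb)^[n] 1) = fun x => ∑' e : E,
        ENNReal.ofReal (M.dp pbar e x) * (M.Rop pbar wb)^[n] 1 (M.wbPiecewise wb e x) :=
      funext (Rop_eq_tsum_wbPiecewise _)
    rw [this]
    exact .tsum fun e =>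
      (measurable_dp hpbar e).ennreal_ofReal.mul (ih.comp (measurable_wbPiecewise hwb e))

theorem measurableSet_OmegaSet [BorelSpace K] [Countable E] (hpbar : M.IsUCExtensionP pbar)
    (hwb : M.IsUCExtensionW wb) : MeasurableSet (M.OmegaSet pbar wb) :=
  .iInter fun _ => measurableSet_le measurable_const (measurable_iterate_Rop_one hpbar hwb _)

end MarkovOperator

section Perp

variable {K : Type*} [MetricSpace K] [MeasurableSpace K] {N E : Type*} {M : MarkovSystem K N E}
  {j0 : N} {xp : N → K} {pbar : E → K → ℝ} {wb : E → K → K} {Λ : Measure (CodeSpace E)}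

theorem tsum_ofReal_indicator_Tset_dp_le_one (hxp : ∀ j, xp j ∈ M.Kset j)
    (hpbar : M.IsUCExtensionP pbar) {σ : CodeSpace E} (hσ : σ ∈ M.codeDomain j0 xp) :
    ∑' e : E, ENNReal.ofReal
      ((M.Tset (M.i e)).indicator (fun σ => M.dp pbar e (M.code j0 xp σ)) σ) ≤ 1 := by
  obtain ⟨e0, e1, h0, h1, h01⟩ := hσ.1 0
  rw [zero_add] at h1
  have hcl := code_mem_closure hxp hσ h1
  calc ∑' e : E, ENNReal.ofReal
        ((M.Tset (M.i e)).indicator (fun σ => M.dp pbar e (M.code j0 xp σ)) σ)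
      ≤ ∑' e : E, {e | M.i e = M.i e1}.indicator
          (fun e => ENNReal.ofReal (pbar e (M.code j0 xp σ))) e :=
        ENNReal.tsum_le_tsum fun e => ?_
    _ = ∑' e : {e : E // M.i e = M.i e1}, ENNReal.ofReal (pbar e (M.code j0 xp σ)) :=
        (tsum_subtype _ _).symm
    _ ≤ 1 := tsum_ofReal_pbar_le_one hpbar hcl
  by_cases hT : σ ∈ M.Tset (M.i e)
  · obtain ⟨e0', h0', ht⟩ := hT.2
    rw [h0, Option.some_inj] at h0'
    have hie : M.i e = M.i e1 := by rw [← ht, h01, h0']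
    rw [Set.indicator_of_mem hT, Set.indicator_of_mem (show e ∈ {e | M.i e = M.i e1} from hie)]
    exact ENNReal.ofReal_le_ofReal (dp_le_pbar hpbar e (hie ▸ hcl))
  · rw [Set.indicator_of_notMem hT, ENNReal.ofReal_zero]
    exact zero_le

theorem IsPerp.nextCondProb_ae_eq (hΛ : M.IsPerp j0 xp pbar Λ) (e : E) :
    nextCondProb Λ e =ᵐ[Λ] (M.Tset (M.i e)).indicator fun σ => M.dp pbar e (M.code j0 xp σ) :=
  hΛ.2.2.2 e

variable [CompleteSpace K] [Countable E]

theorem IsPerp.ae_mem_codeDomain (hΛ : M.IsPerp j0 xp pbar Λ) :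
    ∀ᵐ σ ∂Λ, σ ∈ M.codeDomain j0 xp := by
  have := hΛ.1
  exact (ae_iff_measure_eq (M.measurableSet_codeDomain j0 xp).nullMeasurableSet).2
    (hΛ.2.2.1.trans measure_univ.symm)

theorem IsPerp.aemeasurable_code [BorelSpace K] (hΛ : M.IsPerp j0 xp pbar Λ) :
    AEMeasurable (M.code j0 xp) Λ :=
  ⟨M.pastCode j0 xp, (M.stronglyMeasurable_pastCode j0 xp).measurable.mono pastAlgebra_le le_rfl,
    hΛ.ae_mem_codeDomain.mono fun _ hσ => (pastCode_eq_code hσ).symm⟩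

theorem IsPerp.ae_tsum_nextCondProb_eq_one (hΛ : M.IsPerp j0 xp pbar Λ)
    (hxp : ∀ j, xp j ∈ M.Kset j) (hpbar : M.IsUCExtensionP pbar) :
    ∀ᵐ σ ∂Λ, ∑' e : E, ENNReal.ofReal (nextCondProb Λ e σ) = 1 := by
  have := hΛ.1
  have hmeas : ∀ e, Measurable (nextCondProb Λ e) := fun e =>
    stronglyMeasurable_condExp.measurable.mono pastAlgebra_le le_rfl
  have hle : ∀ᵐ σ ∂Λ, ∑' e : E, ENNReal.ofReal (nextCondProb Λ e σ) ≤ 1 := by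
    filter_upwards [hΛ.ae_mem_codeDomain, ae_all_iff.2 hΛ.nextCondProb_ae_eq] with σ hσ hce
    simp only [hce]
    exact tsum_ofReal_indicator_Tset_dp_le_one hxp hpbar hσ
  have hint : ∫⁻ σ, ∑' e : E, ENNReal.ofReal (nextCondProb Λ e σ) ∂Λ = 1 := by
    rw [lintegral_tsum fun e => (hmeas e).ennreal_ofReal.aemeasurable]
    simp only [nextCondProb,
      lintegral_ofReal_condExp_indicator pastAlgebra_le (measurableSet_coord_eq 1 _)]
    refine tsum_measure_coord_eq_some ?_
    filter_upwards [hΛ.ae_mem_codeDomain] with σ hσ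
    obtain ⟨e, -, he, -⟩ := hσ.1 1
    simp [he]
  exact ae_eq_of_ae_le_of_lintegral_le hle (by rw [hint]; exact ENNReal.one_ne_top)
    aemeasurable_const (by rw [hint, lintegral_const, measure_univ, one_mul])

variable [BorelSpace K]

theorem IsPerp.ae_one_le_iterate_Rop_of_nextCondProb_pos (hΛ : M.IsPerp j0 xp pbar Λ)
    (hxp : ∀ j, xp j ∈ M.Kset j) (hpbar : M.IsUCExtensionP pbar) (hwb : M.IsUCExtensionW wb)
    {n : ℕ} (hS : ∀ᵐ σ ∂Λ, 1 ≤ (M.Rop pbar wb)^[n] 1 (M.code j0 xp (shiftMap E σ)))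
    (e : E) :
    ∀ᵐ σ ∂Λ, 0 < nextCondProb Λ e σ →
      1 ≤ (M.Rop pbar wb)^[n] 1 (M.wbPiecewise wb e (M.code j0 xp σ)) := by
  have := hΛ.1
  set C := {σ | (M.Rop pbar wb)^[n] 1 (M.wbPiecewise wb e (M.pastCode j0 xp σ)) < 1}
  have hC : MeasurableSet[pastAlgebra E] C :=
    ((measurable_iterate_Rop_one hpbar hwb n).comp ((measurable_wbPiecewise hwb e).comp
      (M.stronglyMeasurable_pastCode j0 xp).measurable)) measurableSet_Iio
  have hAC : Λ ({σ | σ 1 = some e} ∩ C) = 0 := by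
    rw [measure_eq_zero_iff_ae_notMem]
    filter_upwards [hΛ.ae_mem_codeDomain, hS] with σ hσ hSσ ⟨he, hlt⟩
    have hlt : (M.Rop pbar wb)^[n] 1 (M.wbPiecewise wb e (M.pastCode j0 xp σ)) < 1 := hlt
    rw [pastCode_eq_code hσ, wbPiecewise_of_mem e (code_mem_closure hxp hσ he),
      ← (code_shiftMap hxp hwb hσ he).2] at hlt
    exact hlt.not_ge hSσ
  filter_upwards [hΛ.ae_mem_codeDomain, ae_condExp_indicator_eq_zero_of_measure_inter_eq_zero
    pastAlgebra_le (measurableSet_coord_eq 1 (some e)) hC hAC] with σ hσ hzero hpos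
  rw [← pastCode_eq_code hσ]
  exact not_lt.1 fun hlt => hpos.ne' (hzero hlt)

theorem IsPerp.ae_one_le_iterate_Rop (hΛ : M.IsPerp j0 xp pbar Λ)
    (hxp : ∀ j, xp j ∈ M.Kset j) (hpbar : M.IsUCExtensionP pbar) (hwb : M.IsUCExtensionW wb)
    (n : ℕ) : ∀ᵐ σ ∂Λ, 1 ≤ (M.Rop pbar wb)^[n] 1 (M.code j0 xp σ) := by
  induction n with
  | zero => exact .of_forall fun _ => le_rfl
  | succ n ih =>
    have hS := (MeasurePreserving.quasiMeasurePreserving ⟨measurable_shiftMap, hΛ.2.1⟩).ae ih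
    filter_upwards [hΛ.ae_tsum_nextCondProb_eq_one hxp hpbar,
      ae_all_iff.2 (hΛ.ae_one_le_iterate_Rop_of_nextCondProb_pos hxp hpbar hwb hS),
      ae_all_iff.2 hΛ.nextCondProb_ae_eq] with σ hsum hpos hce
    rw [Function.iterate_succ_apply', Rop_eq_tsum_wbPiecewise, ← hsum]
    refine ENNReal.tsum_le_tsum fun e => ?_
    rcases le_or_gt (nextCondProb Λ e σ) 0 with hle | hlt
    · rw [ENNReal.ofReal_of_nonpos hle]
      exact zero_le
    · calc ENNReal.ofReal (nextCondProb Λ e σ) = ENNReal.ofReal (nextCondProb Λ e σ) * 1 :=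
            (mul_one _).symm
        _ ≤ _ := mul_le_mul' (ENNReal.ofReal_le_ofReal ?_) (hpos e hlt)
      rw [hce e]
      exact Set.indicator_le_self' (fun _ _ => dp_nonneg hpbar e _) σ

end Perp

end MarkovSystem

variable {K : Type*} [MetricSpace K] [CompleteSpace K] [MeasurableSpace K] [BorelSpace K]
  {N E : Type*} [Countable N] [Countable E]

theorem perp_pushforward_concentrated_on_Omega_general
    (M : MarkovSystem K N E) (j0 : N) (xp : N → K) (hxp : ∀ j, xp j ∈ M.Kset j)
    (pbar : E → K → ℝ) (hpbar : M.IsUCExtensionP pbar)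
    (wb : E → K → K) (hwb : M.IsUCExtensionW wb)
    (Λ : Measure (CodeSpace E)) (hΛ : M.IsPerp j0 xp pbar Λ) :
    Measure.map (M.code j0 xp) Λ (M.OmegaSet pbar wb) = 1 := by
  have hF := hΛ.aemeasurable_code
  have hΩ := MarkovSystem.measurableSet_OmegaSet hpbar hwb
  have := hΛ.1
  have := Measure.isProbabilityMeasure_map hF
  rw [← measure_univ (μ := Λ.map (M.code j0 xp))]
  refine (ae_iff_measure_eq hΩ.nullMeasurableSet).1 ((ae_map_iff hF hΩ).2 ?_)
  filter_upwards [ae_all_iff.2 (hΛ.ae_one_le_iterate_Rop hxp hpbar hwb)] with σ h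
  exact Set.mem_iInter.2 fun n => h (n + 1)

/-- If `M` is uniformly continuous and `Λ ∈ E_⊥(M)`, then `F(Λ)(Ω) = 1`. -/
theorem perp_pushforward_concentrated_on_Omega
    (M : MarkovSystem K N E) (j0 : N) (xp : N → K) (hxp : ∀ j, xp j ∈ M.Kset j)
    (huc : M.IsUniformlyContinuous)
    (pbar : E → K → ℝ) (hpbar : M.IsUCExtensionP pbar)
    (wb : E → K → K) (hwb : M.IsUCExtensionW wb)
    (Λ : Measure (CodeSpace E)) (hΛ : M.IsPerp j0 xp pbar Λ) :
    Measure.map (M.code j0 xp) Λ (M.OmegaSet pbar wb) = 1 :=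
  perp_pushforward_concentrated_on_Omega_general M j0 xp hxp pbar hpbar wb hwb Λ hΛ
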